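/- If v, w ∈ [0,1]^N satisfy v ≼ w (i.e., v_i ≤ w_i for all i), then θ_v ≤ θ_w, where θ_u = max_{S ⊆ [N], |S| ≤ K} R(S, u) for a preference vector u. -/

import Mathlib

/-- The expected reward `R(S, v)` of an assortment `S`. -/
noncomputable def Rew {N : ℕ} (r v : Fin N → ℝ) (S : Finset (Fin N)) : ℝ :=
  (∑ i ∈ S, r i * v i) / (1 + ∑ i ∈ S, v i)

/-- `θ_v`: the optimal expected reward over assortments of size at most `K`. -/
noncomputable def thetaOpt (N K : ℕ) (r v : Fin N → ℝ) : ℝ :=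
  ((Finset.univ : Finset (Fin N)).powerset.filter (fun S => S.card ≤ K)).sup'
    ⟨∅, by simp⟩ (Rew r v)

/- `Top([N], w, θ)`: take the `min {K, N}` items `i` with the largest values
`(r i − θ) * w i` (ties broken in favor of smaller index), then remove all items
with `r i − θ ≤ 0`. -/
open Classical in
noncomputable def TopSet (N K : ℕ) (r w : Fin N → ℝ) (θ : ℝ) : Finset (Fin N) :=
  ((List.insertionSort (fun i j =>
      (r j - θ) * w j < (r i - θ) * w i ∨
      ((r i - θ) * w i = (r j - θ) * w j ∧ i ≤ j)) (List.finRange N)).take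
    (min K N)).toFinset.filter (fun i => θ < r i)

/-! If `θ = R(S, v)` then `θ = ∑_{i ∈ S} (r i - θ) v i`. Dropping the items with `r i ≤ θ` and
raising `v` to `w` can only increase the right-hand side, and `θ ≤ R(T, w)` is equivalent to
`θ ≤ ∑_{i ∈ T} (r i - θ) w i`. Hence the subassortment `T = {i ∈ S | θ < r i}` earns at least `θ`
under `w`. -/

theorem le_rew_iff {N : ℕ} {r u : Fin N → ℝ} {A : Finset (Fin N)} (hu : ∀ i ∈ A, 0 ≤ u i)
    (θ : ℝ) : θ ≤ Rew r u A ↔ θ ≤ ∑ i ∈ A, (r i - θ) * u i := by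
  have hD : 0 < 1 + ∑ i ∈ A, u i := by linarith [Finset.sum_nonneg hu]
  have hsum : ∑ i ∈ A, (r i - θ) * u i = ∑ i ∈ A, r i * u i - θ * ∑ i ∈ A, u i := by
    simp only [sub_mul, Finset.sum_sub_distrib, Finset.mul_sum]
  rw [Rew, le_div_iff₀ hD, hsum]
  constructor <;> intro h <;> linarith

theorem Finset.sum_sub_mul_le_sum_filter_lt {ι : Type*} (s : Finset ι) (r u : ι → ℝ) (θ : ℝ)
    (hu : ∀ i ∈ s, 0 ≤ u i) :
    ∑ i ∈ s, (r i - θ) * u i ≤ ∑ i ∈ s with θ < r i, (r i - θ) * u i := by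
  rw [← Finset.sum_filter_add_sum_filter_not s (θ < r ·)]
  refine add_le_of_nonpos_right (Finset.sum_nonpos fun i hi => ?_)
  obtain ⟨his, hri⟩ := Finset.mem_filter.1 hi
  exact mul_nonpos_of_nonpos_of_nonneg (sub_nonpos.2 (not_lt.1 hri)) (hu i his)

theorem rew_le_rew_filter_lt {N : ℕ} {r v w : Fin N → ℝ} (S : Finset (Fin N))
    (hv : ∀ i, 0 ≤ v i) (hvw : ∀ i, v i ≤ w i) :
    Rew r v S ≤ Rew r w (S.filter fun i => Rew r v S < r i) := by
  set θ := Rew r v S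
  rw [le_rew_iff (fun i _ => (hv i).trans (hvw i))]
  calc θ ≤ ∑ i ∈ S, (r i - θ) * v i := (le_rew_iff (fun i _ => hv i) θ).1 le_rfl
    _ ≤ ∑ i ∈ S with θ < r i, (r i - θ) * v i :=
      S.sum_sub_mul_le_sum_filter_lt r v θ fun i _ => hv i
    _ ≤ ∑ i ∈ S with θ < r i, (r i - θ) * w i :=
      Finset.sum_le_sum fun i hi =>
        mul_le_mul_of_nonneg_left (hvw i) (sub_nonneg.2 (Finset.mem_filter.1 hi).2.le)

theorem rew_le_thetaOpt {N K : ℕ} {r v : Fin N → ℝ} {S : Finset (Fin N)} (hS : S.card ≤ K) :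
    Rew r v S ≤ thetaOpt N K r v :=
  Finset.le_sup' (Rew r v) (by simp [hS])

theorem thetaOpt_le {N K : ℕ} {r v : Fin N → ℝ} {θ : ℝ}
    (h : ∀ S : Finset (Fin N), S.card ≤ K → Rew r v S ≤ θ) : thetaOpt N K r v ≤ θ :=
  Finset.sup'_le _ _ fun S hS => h S (Finset.mem_filter.1 hS).2

theorem stmt4_general (N K : ℕ) (r v w : Fin N → ℝ)
    (hv : ∀ i, 0 ≤ v i ∧ v i ≤ 1) (hvw : ∀ i, v i ≤ w i) :
    thetaOpt N K r v ≤ thetaOpt N K r w :=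
  thetaOpt_le fun S hS =>
    (rew_le_rew_filter_lt S (fun i => (hv i).1) hvw).trans
      (rew_le_thetaOpt ((Finset.card_filter_le _ _).trans hS))

/-- Monotonicity of the optimal expected reward: `v ≼ w` implies `θ_v ≤ θ_w`. -/
theorem stmt4 (N K : ℕ) (hK : 1 ≤ K) (hKN : K ≤ N) (r v w : Fin N → ℝ)
    (hr : ∀ i, 0 < r i ∧ r i ≤ 1) (hv : ∀ i, 0 ≤ v i ∧ v i ≤ 1)
    (hw : ∀ i, 0 ≤ w i ∧ w i ≤ 1) (hvw : ∀ i, v i ≤ w i) :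
    thetaOpt N K r v ≤ thetaOpt N K r w :=
  stmt4_general N K r v w hv hvw
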